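/- arXiv:1312.3421 — 2 statements merged into one kernel-verified Lean document; each statement's English description precedes it below -/
import Mathlib

section
/- Thompson's group F is not virtually abelian. -/
/-
Thompson's group `F` acts on `ℝ` by piecewise linear homeomorphisms: `x₀` acts as the translation
`t ↦ t - 1` and `x₁` as a map `pl` that fixes `(-∞, 0]` and moves every positive point to the left.
The defining relators hold because `x₀x₁⁻¹` fixes `[1, ∞)` while `x₀⁻ᵏx₁x₀ᵏ` fixes `(-∞, k]`, so the
two entries of each commutator have disjoint supports. If `F` had an abelian subgroup of finite
index, some common power `n ≥ 1` would make `x₀ⁿ` and `x₁ⁿ` commute. But `x₀ⁿx₁ⁿ` and `x₁ⁿx₀ⁿ`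
differ at `1`: translating first lands in `(-∞, 0]`, where `pl` is the identity, whereas `plⁿ`
moves `1` strictly to the left.
-/

namespace ThompsonAux
/-- The free generator `x₀`. -/
def a : FreeGroup (Fin 2) := FreeGroup.of 0
/-- The free generator `x₁`. -/
def b : FreeGroup (Fin 2) := FreeGroup.of 1
end ThompsonAux

open scoped commutatorElement

/-- Relators `[x₀x₁⁻¹, x₀⁻¹x₁x₀]` and `[x₀x₁⁻¹, x₀⁻²x₁x₀²]` of the standard finite
presentation of Thompson's group `F`. -/
def thompsonRels : Set (FreeGroup (Fin 2)) :=
  { ⁅ThompsonAux.a * ThompsonAux.b⁻¹, ThompsonAux.a⁻¹ * ThompsonAux.b * ThompsonAux.a⁆,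
    ⁅ThompsonAux.a * ThompsonAux.b⁻¹, ThompsonAux.a⁻¹ ^ 2 * ThompsonAux.b * ThompsonAux.a ^ 2⁆ }

/-- Thompson's group `F`, via its standard finite presentation. -/
def ThompsonF := PresentedGroup thompsonRels

instance : Group ThompsonF := by unfold ThompsonF; infer_instance

/-- The generators `x₀, x₁` of Thompson's group `F`. -/
def ThompsonF.x (i : Fin 2) : ThompsonF := PresentedGroup.of i

lemma Subgroup.exists_commute_pow_pow {G : Type*} [Group G] (H : Subgroup G) [H.FiniteIndex]
    [IsMulCommutative H] (g h : G) : ∃ n ≠ 0, Commute (g ^ n) (h ^ n) :=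
  ⟨H.normalCore.index, Subgroup.FiniteIndex.index_ne_zero,
    setLike_mul_comm (H.normalCore_le (H.normalCore.pow_index_mem g))
      (H.normalCore_le (H.normalCore.pow_index_mem h))⟩

namespace ThompsonF

/-- The action of `x₁` on `ℝ`; `x₀` acts as `Equiv.addRight (-1)`. -/
noncomputable def pl : Equiv.Perm ℝ where
  toFun t := if t ≤ 0 then t else if t ≤ 2 then t / 2 else t - 1
  invFun t := if t ≤ 0 then t else if t ≤ 1 then 2 * t else t + 1
  left_inv t := by dsimp only; split_ifs <;> linarith
  right_inv t := by dsimp only; split_ifs <;> linarith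

lemma pl_apply (t : ℝ) : pl t = if t ≤ 0 then t else if t ≤ 2 then t / 2 else t - 1 := rfl

lemma pl_apply_of_nonpos {t : ℝ} (ht : t ≤ 0) : pl t = t := if_pos ht

lemma pl_apply_le (t : ℝ) : pl t ≤ t := by
  rw [pl_apply]; split_ifs <;> linarith

lemma pl_apply_lt {t : ℝ} (ht : 0 < t) : pl t < t := by
  rw [pl_apply]; split_ifs <;> linarith

lemma pl_inv_apply_of_one_le {t : ℝ} (ht : 1 ≤ t) : pl⁻¹ t = t + 1 := by
  rw [Equiv.Perm.inv_eq_iff_eq, pl_apply]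
  split_ifs <;> linarith

lemma pl_pow_apply_le (n : ℕ) (t : ℝ) : (pl ^ n) t ≤ t := by
  induction n generalizing t with
  | zero => rfl
  | succ n ih => exact (ih (pl t)).trans (pl_apply_le t)

lemma pl_pow_apply_lt {n : ℕ} (hn : n ≠ 0) {t : ℝ} (ht : 0 < t) : (pl ^ n) t < t := by
  obtain ⟨m, rfl⟩ := Nat.exists_eq_succ_of_ne_zero hn
  exact (pl_pow_apply_le m (pl t)).trans_lt (pl_apply_lt ht)

lemma disjoint_addRight_mul_pl_inv {k : ℕ} (hk : 1 ≤ k) :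
    (Equiv.addRight (-1 : ℝ) * pl⁻¹).Disjoint
      ((Equiv.addRight (-1) ^ k)⁻¹ * pl * Equiv.addRight (-1) ^ k) := by
  intro t
  rcases le_total 1 t with ht | ht
  · left
    rw [Equiv.Perm.mul_apply, pl_inv_apply_of_one_le ht]
    simp
  · right
    have hk' : (1 : ℝ) ≤ k := by exact_mod_cast hk
    simp [pl_apply_of_nonpos (show t + -k ≤ 0 by linarith)]

lemma not_commute_addRight_pow_pl_pow {n : ℕ} (hn : n ≠ 0) :
    ¬ Commute (Equiv.addRight (-1 : ℝ) ^ n) (pl ^ n) := by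
  intro h
  have hn' : (1 : ℝ) ≤ n := by exact_mod_cast Nat.one_le_iff_ne_zero.mpr hn
  have heval := Equiv.Perm.ext_iff.mp h.eq 1
  simp only [Equiv.Perm.mul_apply, Equiv.nsmul_addRight, Equiv.coe_addRight, nsmul_eq_mul,
    mul_neg_one] at heval
  have hfix : (pl ^ n) (1 + -n) = 1 + -n :=
    Equiv.Perm.pow_apply_eq_self_of_apply_eq_self (pl_apply_of_nonpos (by linarith)) n
  linarith [pl_pow_apply_lt hn one_pos]

lemma lift_eq_one_of_mem_thompsonRels :
    ∀ r ∈ thompsonRels, FreeGroup.lift ![Equiv.addRight (-1 : ℝ), pl] r = 1 := by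
  rintro r (rfl | rfl) <;>
  simp only [ThompsonAux.a, ThompsonAux.b, map_commutatorElement,
    commutatorElement_eq_one_iff_commute, map_mul, map_inv, map_pow, FreeGroup.lift_apply_of]
  · simpa using (disjoint_addRight_mul_pl_inv le_rfl).commute
  · simpa using (disjoint_addRight_mul_pl_inv one_le_two).commute

noncomputable def toPerm : ThompsonF →* Equiv.Perm ℝ :=
  PresentedGroup.toGroup lift_eq_one_of_mem_thompsonRels

lemma toPerm_x_zero : toPerm (x 0) = Equiv.addRight (-1) := PresentedGroup.toGroup.of _

lemma toPerm_x_one : toPerm (x 1) = pl := PresentedGroup.toGroup.of _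

end ThompsonF

/-- Thompson's group `F` is not virtually abelian: it has no abelian subgroup of
finite index. -/
theorem thompsonF_not_virtually_abelian :
    ¬ ∃ H : Subgroup ThompsonF, H.FiniteIndex ∧ IsMulCommutative H := by
  rintro ⟨H, _, _⟩
  obtain ⟨n, hn, hcomm⟩ := H.exists_commute_pow_pow (ThompsonF.x 0) (ThompsonF.x 1)
  apply ThompsonF.not_commute_addRight_pow_pl_pow hn
  simpa only [map_pow, ThompsonF.toPerm_x_zero, ThompsonF.toPerm_x_one] using
    hcomm.map ThompsonF.toPerm
end

section
/- Every finite-index subgroup of Thompson's group F has abelianization isomorphic to ℤ²; equivalently, the virtual first Betti number of F equals 2. -/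
open scoped commutatorElement

/-!
Let `a, b` be the images of `x₀, x₁` in a quotient of `F` and `xₙ₊₁ = a⁻ⁿ b aⁿ`. The two relators
force all the relations `x₁⁻¹ xₙ x₁ = xₙ₊₁` (`n ≥ 2`). If `a` has finite order `n`, then `xₙ₊₁ = b`
and the relation for `n + 1` reads `b = a⁻¹ b a`; so every finite quotient of `F` is abelian and
every finite-index subgroup `H` contains `[F, F]`. A similar computation with the elements
`xₙ xₙ₊₁⁻¹` shows that `a` and `b` commute as soon as `[b, a]` and `[b, a⁻¹]` do, so `[F, F]` is
perfect and `[H, H] = [F, F]`. As `[F, F]` is the kernel of the exponent-sum map `F → ℤ²`, the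
abelianization of `H` is the image of `H`, a finite-index subgroup of `ℤ²`, hence free of rank two.
-/

lemma commutator_le_ker_of_closure_eq_top {G Q : Type*} [Group G] [Group Q] {s : Set G}
    (hs : Subgroup.closure s = ⊤) (f : G →* Q) (hf : ∀ x ∈ s, ∀ y ∈ s, Commute (f x) (f y)) :
    commutator G ≤ f.ker := by
  have : IsMulCommutative f.range := by
    rw [MonoidHom.range_eq_map, ← hs, MonoidHom.map_closure]
    exact Subgroup.isMulCommutative_closure <| by
      rintro _ ⟨x, hx, rfl⟩ _ ⟨y, hy, rfl⟩
      exact (hf x hx y hy).eq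
  rw [commutator_def, Subgroup.commutator_le]
  intro g _ g' _
  rw [MonoidHom.mem_ker, map_commutatorElement, commutatorElement_eq_one_iff_commute]
  exact congrArg Subtype.val (mul_comm' (f.rangeRestrict g) (f.rangeRestrict g'))

section FiniteIndex

variable {M : Type*} [AddCommGroup M] [Module.Finite ℤ M] [Module.IsTorsionFree ℤ M]

theorem AddSubgroup.nonempty_addEquiv_of_finiteIndex (A : AddSubgroup M) [A.FiniteIndex] :
    Nonempty (A ≃+ M) := by
  let N : Submodule ℤ M := A.toIntSubmodule
  have h : Module.finrank ℤ N = Module.finrank ℤ M := A.finrank_eq_of_finiteIndex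
  exact ⟨(LinearEquiv.ofFinrankEq N M h).toAddEquiv⟩

theorem Subgroup.nonempty_mulEquiv_of_finiteIndex (L : Subgroup (Multiplicative M))
    [L.FiniteIndex] : Nonempty (L ≃* Multiplicative M) := by
  have : L.toAddSubgroup'.FiniteIndex := ⟨FiniteIndex.index_ne_zero (H := L)⟩
  obtain ⟨e⟩ := L.toAddSubgroup'.nonempty_addEquiv_of_finiteIndex
  exact ⟨AddEquiv.toMultiplicative e⟩

end FiniteIndex

theorem Subgroup.finiteIndex_map {G G' : Type*} [Group G] [Group G'] {f : G →* G'}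
    (hf : Function.Surjective f) (H : Subgroup G) [H.FiniteIndex] : (H.map f).FiniteIndex :=
  ⟨ne_zero_of_dvd_ne_zero FiniteIndex.index_ne_zero (H.index_map_dvd hf)⟩

noncomputable def Subgroup.abelianizationEquivMap {G G' : Type*} [Group G] [Group G']
    (H : Subgroup G) (f : G →* G') (hf : f.ker = ⁅H, H⁆) : Abelianization H ≃* H.map f :=
  (QuotientGroup.quotientMulEquivOfEq (by
      rw [← MonoidHom.comap_ker, hf, ← H.map_subtype_commutator,
        comap_map_eq_self_of_injective H.subtype_injective])).trans
    ((QuotientGroup.quotientKerEquivRange (f.comp H.subtype)).trans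
      (MulEquiv.subgroupCongr (by rw [MonoidHom.range_comp, range_subtype])))

section ThompsonPair

variable {G : Type*} [Group G]

/-- For `a = x₀` and `b = x₁` this is the generator `xₙ₊₁` of the infinite presentation of `F`. -/
def thompsonX (a b : G) (n : ℕ) : G := a⁻¹ ^ n * b * a ^ n

structure IsThompsonPair (a b : G) : Prop where
  commute_one : Commute (a * b⁻¹) (a⁻¹ * b * a)
  commute_two : Commute (a * b⁻¹) (a⁻¹ ^ 2 * b * a ^ 2)

variable {a b : G}

@[simp]
lemma thompsonX_zero : thompsonX a b 0 = b := by simp [thompsonX]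

lemma thompsonX_succ (n : ℕ) : thompsonX a b (n + 1) = a⁻¹ * thompsonX a b n * a := by
  simp only [thompsonX, pow_succ]
  group

lemma thompsonX_eq_of_pow_eq_one {n : ℕ} (ha : a ^ n = 1) : thompsonX a b n = b := by
  simp [thompsonX, inv_pow, ha]

lemma conj_thompsonX_of_commute {n : ℕ} (h : Commute (a * b⁻¹) (thompsonX a b n)) :
    b⁻¹ * thompsonX a b n * b = thompsonX a b (n + 1) :=
  calc b⁻¹ * thompsonX a b n * b = a⁻¹ * ((a * b⁻¹) * thompsonX a b n) * b := by group
    _ = a⁻¹ * (thompsonX a b n * (a * b⁻¹)) * b := by rw [h.eq]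
    _ = thompsonX a b (n + 1) := by rw [thompsonX_succ]; group

lemma conj_thompsonX_one_of_conj_thompsonX {m : ℕ}
    (hm : b⁻¹ * thompsonX a b (m + 1) * b = thompsonX a b (m + 2)) :
    (thompsonX a b 1)⁻¹ * thompsonX a b (m + 2) * thompsonX a b 1 = thompsonX a b (m + 3) :=
  calc (thompsonX a b 1)⁻¹ * thompsonX a b (m + 2) * thompsonX a b 1
      = (a⁻¹ * b * a)⁻¹ * (a⁻¹ * thompsonX a b (m + 1) * a) * (a⁻¹ * b * a) := by
        rw [thompsonX_succ (m + 1), thompsonX_succ 0, thompsonX_zero]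
    _ = a⁻¹ * (b⁻¹ * thompsonX a b (m + 1) * b) * a := by group
    _ = thompsonX a b (m + 3) := by rw [hm, thompsonX_succ (m + 2)]

lemma conj_thompsonX_add_three {m : ℕ} (h₀ : b⁻¹ * thompsonX a b 1 * b = thompsonX a b 2)
    (hm : b⁻¹ * thompsonX a b (m + 1) * b = thompsonX a b (m + 2))
    (hm' : b⁻¹ * thompsonX a b (m + 2) * b = thompsonX a b (m + 3)) :
    b⁻¹ * thompsonX a b (m + 3) * b = thompsonX a b (m + 4) :=
  calc b⁻¹ * thompsonX a b (m + 3) * b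
      = (b⁻¹ * thompsonX a b 1 * b)⁻¹ * (b⁻¹ * thompsonX a b (m + 2) * b) *
          (b⁻¹ * thompsonX a b 1 * b) := by rw [← conj_thompsonX_one_of_conj_thompsonX hm]; group
    _ = a⁻¹ * ((thompsonX a b 1)⁻¹ * thompsonX a b (m + 2) * thompsonX a b 1) * a := by
      rw [h₀, hm', thompsonX_succ 1, thompsonX_succ (m + 2)]; group
    _ = thompsonX a b (m + 4) := by rw [conj_thompsonX_one_of_conj_thompsonX hm, ← thompsonX_succ]

namespace IsThompsonPair

variable (h : IsThompsonPair a b)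
include h

lemma conj_thompsonX_one : b⁻¹ * thompsonX a b 1 * b = thompsonX a b 2 :=
  conj_thompsonX_of_commute (by simpa [thompsonX] using h.commute_one)

lemma conj_thompsonX_two : b⁻¹ * thompsonX a b 2 * b = thompsonX a b 3 :=
  conj_thompsonX_of_commute h.commute_two

-- The relations `x₁⁻¹ xₙ x₁ = xₙ₊₁` (`n ≥ 2`) of the infinite presentation of `F`.
lemma conj_thompsonX (n : ℕ) : b⁻¹ * thompsonX a b (n + 1) * b = thompsonX a b (n + 2) := by
  induction n using Nat.twoStepInduction with
  | zero => exact h.conj_thompsonX_one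
  | one => exact h.conj_thompsonX_two
  | more m hm hm' => exact conj_thompsonX_add_three h.conj_thompsonX_one hm hm'

lemma commute_of_isOfFinOrder (ha : IsOfFinOrder a) : Commute a b := by
  obtain ⟨n, hn, han⟩ := ha.exists_pow_eq_one
  obtain ⟨m, rfl⟩ := Nat.exists_eq_add_one_of_ne_zero hn.ne'
  have hb : b = a⁻¹ * b * a := by
    simpa [thompsonX_succ (m + 1), thompsonX_eq_of_pow_eq_one han] using h.conj_thompsonX m
  show a * b = b * a
  nth_rw 1 [hb]
  group

lemma commute_of_commute_commutatorElement (hc : Commute ⁅b, a⁆ ⁅b, a⁻¹⁆) : Commute a b := by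
  set e : ℕ → G := fun n ↦ thompsonX a b n * (thompsonX a b (n + 1))⁻¹ with he
  have hd : ⁅b, a⁻¹⁆ = e 0 := by
    simp only [he]; rw [commutatorElement_def, thompsonX_succ, thompsonX_zero]; group
  have conj_a (n : ℕ) : a⁻¹ * e n * a = e (n + 1) := by
    simp only [he]; rw [thompsonX_succ (n + 1), thompsonX_succ n]
    simp only [mul_inv_rev, inv_inv, mul_assoc, mul_inv_cancel_left]
  have conj_b_zero : b⁻¹ * e 0 * b = e 0 * e 1 := by
    simp only [he]; rw [← h.conj_thompsonX_one, thompsonX_zero]; group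
  have conj_b_one : b⁻¹ * e 1 * b = e 2 := by
    simp only [he]; rw [← h.conj_thompsonX_two, ← h.conj_thompsonX_one]
    simp only [mul_inv_rev, inv_inv, mul_assoc, mul_inv_cancel_left]
  -- `ba = ⁅b, a⁆ ab`, so conjugation by `ab` and by `ba` agree on `⁅b, a⁻¹⁆`
  have conj_ab_ba : (a * b)⁻¹ * e 0 * (a * b) = (b * a)⁻¹ * e 0 * (b * a) := by
    rw [← hd]
    calc (a * b)⁻¹ * ⁅b, a⁻¹⁆ * (a * b)
        = (b * a)⁻¹ * (⁅b, a⁆ * ⁅b, a⁻¹⁆ * ⁅b, a⁆⁻¹) * (b * a) := by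
          simp only [commutatorElement_def]; group
      _ = (b * a)⁻¹ * ⁅b, a⁻¹⁆ * (b * a) := by rw [hc.eq]; group
  have he₁ : e 1 = 1 := by
    have : e 2 = e 1 * e 2 :=
      calc e 2 = b⁻¹ * (a⁻¹ * e 0 * a) * b := by rw [conj_a, conj_b_one]
        _ = (a * b)⁻¹ * e 0 * (a * b) := by group
        _ = a⁻¹ * (b⁻¹ * e 0 * b) * a := by rw [conj_ab_ba]; group
        _ = (a⁻¹ * e 0 * a) * (a⁻¹ * e 1 * a) := by rw [conj_b_zero]; group
        _ = e 1 * e 2 := by rw [conj_a, conj_a]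
    simpa using this
  have he₀ : ⁅b, a⁻¹⁆ = 1 := by
    rw [hd, ← conj_eq_one_iff (a := a⁻¹), inv_inv, conj_a, he₁]
  exact (Commute.inv_right_iff.mp (commutatorElement_eq_one_iff_commute.mp he₀)).symm

end IsThompsonPair
end ThompsonPair

namespace ThompsonF

variable {G : Type*} [Group G]

lemma isThompsonPair_map (f : ThompsonF →* G) : IsThompsonPair (f (x 0)) (f (x 1)) := by
  let g : FreeGroup (Fin 2) →* G := f.comp (PresentedGroup.mk thompsonRels)
  have hrel {r} (hr : r ∈ thompsonRels) : g r = 1 :=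
    (congrArg f (PresentedGroup.one_of_mem hr)).trans f.map_one
  have h₁ := hrel (Set.mem_insert _ _)
  have h₂ := hrel (Set.mem_insert_of_mem _ rfl)
  simp only [ThompsonAux.a, ThompsonAux.b, map_commutatorElement, map_mul, map_inv, map_pow]
    at h₁ h₂
  exact ⟨commutatorElement_eq_one_iff_commute.mp h₁, commutatorElement_eq_one_iff_commute.mp h₂⟩

lemma commutator_le_ker (f : ThompsonF →* G) (h : Commute (f (x 0)) (f (x 1))) :
    commutator ThompsonF ≤ f.ker :=
  commutator_le_ker_of_closure_eq_top (PresentedGroup.closure_range_of _) f <| by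
    rintro _ ⟨i, rfl⟩ _ ⟨j, rfl⟩
    fin_cases i <;> fin_cases j
    exacts [Commute.refl _, h, h.symm, Commute.refl _]

lemma commutator_le_of_finiteIndex (H : Subgroup ThompsonF) [H.FiniteIndex] :
    commutator ThompsonF ≤ H := by
  let π := QuotientGroup.mk' H.normalCore
  have hc := (isThompsonPair_map π).commute_of_isOfFinOrder (isOfFinOrder_of_finite _)
  calc commutator ThompsonF ≤ π.ker := commutator_le_ker π hc
    _ = H.normalCore := QuotientGroup.ker_mk' _
    _ ≤ H := H.normalCore_le

lemma commutator_commutator_eq :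
    ⁅commutator ThompsonF, commutator ThompsonF⁆ = commutator ThompsonF := by
  refine le_antisymm (Subgroup.commutator_le_self _) ?_
  let π := QuotientGroup.mk' ⁅commutator ThompsonF, commutator ThompsonF⁆
  have hc : Commute ⁅π (x 1), π (x 0)⁆ ⁅π (x 1), (π (x 0))⁻¹⁆ := by
    rw [← commutatorElement_eq_one_iff_commute, ← map_inv, ← map_commutatorElement,
      ← map_commutatorElement, ← map_commutatorElement, ← MonoidHom.mem_ker,
      QuotientGroup.ker_mk']
    exact Subgroup.commutator_mem_commutator
      (Subgroup.commutator_mem_commutator (Subgroup.mem_top _) (Subgroup.mem_top _))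
      (Subgroup.commutator_mem_commutator (Subgroup.mem_top _) (Subgroup.mem_top _))
  have := commutator_le_ker π ((isThompsonPair_map π).commute_of_commute_commutatorElement hc)
  rwa [QuotientGroup.ker_mk'] at this

def exponentSumHom : ThompsonF →* Multiplicative (ℤ × ℤ) :=
  PresentedGroup.toGroup (G := Multiplicative (ℤ × ℤ)) (f := ![.ofAdd (1, 0), .ofAdd (0, 1)]) <| by
    rintro r (rfl | rfl) <;>
      rw [map_commutatorElement, commutatorElement_eq_one_iff_commute] <;> exact Commute.all _ _

@[simp]
lemma exponentSumHom_x_zero : exponentSumHom (x 0) = .ofAdd (1, 0) :=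
  PresentedGroup.toGroup.of _

@[simp]
lemma exponentSumHom_x_one : exponentSumHom (x 1) = .ofAdd (0, 1) :=
  PresentedGroup.toGroup.of _

lemma exponentSumHom_surjective : Function.Surjective exponentSumHom := by
  intro p
  refine ⟨x 0 ^ p.toAdd.1 * x 1 ^ p.toAdd.2, ?_⟩
  simp [← ofAdd_zsmul, ← ofAdd_add]

lemma ker_exponentSumHom : exponentSumHom.ker = commutator ThompsonF := by
  refine le_antisymm ?_ (Abelianization.commutator_subset_ker _)
  let ψ : Multiplicative (ℤ × ℤ) →* Abelianization ThompsonF :=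
    ((zpowersHom _ (.of (x 0))).coprod (zpowersHom _ (.of (x 1)))).comp
      (MulEquiv.prodMultiplicative ℤ ℤ).toMonoidHom
  have hψ : ψ.comp exponentSumHom = Abelianization.of :=
    PresentedGroup.ext fun i ↦ by
      change ψ (exponentSumHom (x i)) = .of (x i)
      fin_cases i <;> simp [ψ]
  intro g hg
  rw [← Abelianization.ker_of, MonoidHom.mem_ker, ← hψ, MonoidHom.comp_apply, hg, map_one]

end ThompsonF

/-- Every finite-index subgroup of Thompson's group `F` has abelianization `ℤ²`;
in particular the virtual first Betti number of `F` equals `2`. -/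
theorem thompsonF_finiteIndex_abelianization :
    ∀ H : Subgroup ThompsonF, H.FiniteIndex →
      Nonempty (Abelianization H ≃* Multiplicative (ℤ × ℤ)) := by
  intro H _
  have hle := ThompsonF.commutator_le_of_finiteIndex H
  have hker : ThompsonF.exponentSumHom.ker = ⁅H, H⁆ := by
    refine ThompsonF.ker_exponentSumHom ▸ le_antisymm ?_ (Subgroup.commutator_mono le_top le_top)
    exact ThompsonF.commutator_commutator_eq ▸ Subgroup.commutator_mono hle hle
  have := H.finiteIndex_map ThompsonF.exponentSumHom_surjective
  obtain ⟨e⟩ := (H.map ThompsonF.exponentSumHom).nonempty_mulEquiv_of_finiteIndex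
  exact ⟨(H.abelianizationEquivMap _ hker).trans e⟩
end
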